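/- For β > 0, the scale function W defined by W(x) = (1/β) · Σ_{k=0}^{⌊x⌋} ((-1)^k / k!) · ((x-k)/β)^k · exp((x-k)/β) satisfies, on each open interval (n, n+1) with n ∈ ℕ, the delayed differential equation β·W'(x) = W(x) - W(x-1) for x > 1, where on (0,1) it satisfies β·W'(x) = W(x). -/

import Mathlib

/-!
Write `W = β⁻¹ ∑_{k ≤ ⌊x⌋} T_k` with `T_k(x) = (-1)^k/k! · u^k e^u`, `u = (x - k)/β`. Differentiating,
`β T₀' = T₀` and `β T_{k+1}'(x) = T_{k+1}(x) - T_k(x - 1)`, so the derivative of a partial sum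
telescopes into the partial sum at `x` minus the shorter partial sum at `x - 1`. On `(n, n + 1)`
the floor is constant, so `W` agrees near `x` with the partial sum up to `n`, and the shorter sum
at `x - 1` is `W(x - 1)` when `n ≥ 1` and empty when `n = 0`.
-/

open Real

/-- The scale function `W` arising in the ARL computation for the CUSUM procedure. -/
noncomputable def scaleW (β x : ℝ) : ℝ :=
  (1 / β) * ∑ k ∈ Finset.range (⌊x⌋₊ + 1),
    ((-1 : ℝ) ^ k / (Nat.factorial k)) * ((x - k) / β) ^ k * Real.exp ((x - k) / β)

open Filter Topology Set Finset

noncomputable def scaleTerm (β : ℝ) (k : ℕ) (x : ℝ) : ℝ :=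
  (-1) ^ k / k.factorial * ((x - k) / β) ^ k * exp ((x - k) / β)

noncomputable def scaleSum (β : ℝ) (n : ℕ) (x : ℝ) : ℝ :=
  ∑ k ∈ range n, scaleTerm β k x

lemma scaleW_eq_scaleSum (β x : ℝ) : scaleW β x = β⁻¹ * scaleSum β (⌊x⌋₊ + 1) x := by
  rw [scaleW, one_div]; rfl

section

variable (β : ℝ)

lemma scaleTerm_zero : scaleTerm β 0 = fun x ↦ exp (x / β) := by
  ext x; simp [scaleTerm]

lemma scaleSum_zero : scaleSum β 0 = 0 := by
  ext x; simp [scaleSum]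

lemma scaleSum_succ (n : ℕ) : scaleSum β (n + 1) = scaleSum β n + scaleTerm β n := by
  ext x; exact sum_range_succ _ n

lemma hasDerivAt_scaleTerm_zero (x : ℝ) : HasDerivAt (scaleTerm β 0) (scaleTerm β 0 x / β) x := by
  rw [scaleTerm_zero, div_eq_mul_inv, ← one_div]
  exact ((hasDerivAt_id x).div_const β).exp

lemma hasDerivAt_scaleTerm_succ (k : ℕ) (x : ℝ) :
    HasDerivAt (scaleTerm β (k + 1)) ((scaleTerm β (k + 1) x - scaleTerm β k (x - 1)) / β) x := by
  have hu : HasDerivAt (fun y : ℝ ↦ (y - (k + 1 : ℕ)) / β) (1 / β) x := by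
    simpa using ((hasDerivAt_id x).sub_const _).div_const β
  have := ((hu.fun_pow (k + 1)).const_mul ((-1 : ℝ) ^ (k + 1) / (k + 1).factorial)).fun_mul hu.exp
  refine this.congr_deriv ?_
  have hshift : x - 1 - k = x - (k + 1 : ℕ) := by push_cast; ring
  simp only [scaleTerm, Nat.factorial_succ, hshift]
  push_cast
  field_simp
  ring

lemma hasDerivAt_scaleSum_succ (n : ℕ) (x : ℝ) :
    HasDerivAt (scaleSum β (n + 1)) ((scaleSum β (n + 1) x - scaleSum β n (x - 1)) / β) x := by
  induction n with
  | zero =>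
    simpa [scaleSum_succ, scaleSum_zero] using hasDerivAt_scaleTerm_zero β x
  | succ n ih =>
    rw [scaleSum_succ β (n + 1)]
    refine (ih.add (hasDerivAt_scaleTerm_succ β n x)).congr_deriv ?_
    simp only [scaleSum_succ β n, Pi.add_apply]
    ring

end

lemma hasDerivAt_scaleW {β x : ℝ} (hβ : β ≠ 0) {n : ℕ} (hx : x ∈ Ioo (n : ℝ) (n + 1)) :
    HasDerivAt (scaleW β) ((scaleW β x - β⁻¹ * scaleSum β n (x - 1)) / β) x := by
  have hW : scaleW β =ᶠ[𝓝 x] fun y ↦ β⁻¹ * scaleSum β (n + 1) y := by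
    filter_upwards [isOpen_Ioo.mem_nhds hx] with y hy
    rw [scaleW_eq_scaleSum, Nat.floor_eq_on_Ico n y (Ioo_subset_Ico_self hy)]
  refine ((hasDerivAt_scaleSum_succ β n x).const_mul β⁻¹).congr_of_eventuallyEq hW |>.congr_deriv ?_
  rw [hW.eq_of_nhds]
  field_simp

theorem scaleW_dde (β : ℝ) (hβ : 0 < β) :
    (∀ x ∈ Set.Ioo (0:ℝ) 1,
        ∃ d : ℝ, HasDerivAt (scaleW β) d x ∧ β * d = scaleW β x) ∧
    (∀ n : ℕ, 1 ≤ n → ∀ x ∈ Set.Ioo (n : ℝ) (n + 1),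
        ∃ d : ℝ, HasDerivAt (scaleW β) d x ∧
          β * d = scaleW β x - scaleW β (x - 1)) := by
  refine ⟨fun x hx ↦ ?_, fun n hn x hx ↦ ?_⟩
  · refine ⟨_, hasDerivAt_scaleW hβ.ne' (n := 0) (by simpa using hx), ?_⟩
    rw [scaleSum_zero, mul_div_cancel₀ _ hβ.ne']
    simp
  · refine ⟨_, hasDerivAt_scaleW hβ.ne' hx, ?_⟩
    obtain ⟨m, rfl⟩ := Nat.exists_eq_add_of_le' hn
    have hx1 : x - 1 ∈ Ico (m : ℝ) (m + 1) := by
      constructor <;> push_cast at hx <;> linarith [hx.1, hx.2]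
    rw [mul_div_cancel₀ _ hβ.ne', scaleW_eq_scaleSum β (x - 1), Nat.floor_eq_on_Ico m _ hx1]
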